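/- The second-order tail moment of an NMVM variable S satisfies E[S² | S > s_α] = μ² + c*(1−α*)/(1−α) · (σ² + 2μγ + σ²(s_α + μ) h_{S*}(s_α)) + c**(1−α**)/(1−α) · (γ² + γσ² h_{S**}(s_α)). -/

import Mathlib

open MeasureTheory Set

/-- Density of the normal distribution with mean `m` and variance `v`. -/
noncomputable def ndens (m v x : ℝ) : ℝ :=
  (Real.sqrt (2 * Real.pi * v))⁻¹ * Real.exp (-(x - m) ^ 2 / (2 * v))

/-- Density of the univariate NMVM distribution with parameters `μ, γ, σ` and
mixing density `q` on `(0, ∞)`. -/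
noncomputable def mixdens (μ γ σ : ℝ) (q : ℝ → ℝ) (s : ℝ) : ℝ :=
  ∫ θ in Set.Ioi (0:ℝ), ndens (μ + θ * γ) (θ * σ ^ 2) s * q θ

/-- Survival function of the univariate NMVM distribution. -/
noncomputable def surv (μ γ σ : ℝ) (q : ℝ → ℝ) (c : ℝ) : ℝ :=
  ∫ s in Set.Ioi c, mixdens μ γ σ q s

/-- `k`-th tail moment `E[S^k | S > c]` of the univariate NMVM distribution. -/
noncomputable def tailmom (μ γ σ : ℝ) (q : ℝ → ℝ) (k : ℕ) (c : ℝ) : ℝ :=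
  (surv μ γ σ q c)⁻¹ * ∫ s in Set.Ioi c, s ^ k * mixdens μ γ σ q s

/-!
Given `Θ = θ`, `S` is Gaussian with mean `m = μ + θγ` and variance `v = θσ²`. Since
`-v (x + m) φ(x)` has derivative `(x² - m² - v) φ(x)`, the Gaussian tail moment is
`∫_c^∞ x² φ = (m² + v) ∫_c^∞ φ + v (c + m) φ(c)`. Expanding `m² + v = μ² + θ (2μγ + σ²) + θ² γ²`
and `v (c + m) = θ σ² (c + μ) + θ² σ² γ` and integrating against the mixing density (Fubini), the
factors `θ` and `θ²` turn `π` into the size-biased densities `c* π*` and `c** π**`.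
-/

open ProbabilityTheory

-- For `v ≤ 0` both sides vanish, since `Real.sqrt` is `0` on nonpositive reals.
lemma ndens_eq_gaussianPDFReal (m v : ℝ) : ndens m v = gaussianPDFReal m v.toNNReal := by
  ext x
  rcases le_total 0 v with hv | hv
  · simp [ndens, gaussianPDFReal, Real.coe_toNNReal _ hv]
  · simp [ndens, gaussianPDFReal, Real.toNNReal_of_nonpos hv, Real.sqrt_eq_zero_of_nonpos,
      mul_nonpos_of_nonneg_of_nonpos (by positivity : (0:ℝ) ≤ 2 * Real.pi) hv]

lemma ndens_nonneg (m v x : ℝ) : 0 ≤ ndens m v x := by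
  rw [ndens_eq_gaussianPDFReal]
  exact gaussianPDFReal_nonneg _ _ _

@[fun_prop]
lemma Measurable.ndens {α : Type*} [MeasurableSpace α] {m v x : α → ℝ} (hm : Measurable m)
    (hv : Measurable v) (hx : Measurable x) : Measurable fun a => ndens (m a) (v a) (x a) := by
  unfold _root_.ndens
  fun_prop

lemma integrable_pow_mul_ndens {v : ℝ} (hv : 0 < v) (m : ℝ) (n : ℕ) :
    Integrable fun x => x ^ n * ndens m v x := by
  have hv' : v.toNNReal ≠ 0 := by simpa using hv
  have h := (memLp_id_gaussianReal (μ := m) (v := v.toNNReal) n).integrable_norm_pow'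
  rw [gaussianReal_of_var_ne_zero _ hv', gaussianPDF_def,
    integrable_withDensity_iff_integrable_smul' (by fun_prop) (by simp)] at h
  rw [← integrable_norm_iff (by fun_prop)]
  refine h.congr (ae_of_all _ fun x => ?_)
  dsimp only
  rw [ndens_eq_gaussianPDFReal, ENNReal.toReal_ofReal (gaussianPDFReal_nonneg _ _ _), smul_eq_mul,
    norm_mul, norm_pow, Real.norm_of_nonneg (gaussianPDFReal_nonneg _ _ _), mul_comm, id]

lemma setIntegral_ndens_le_one (m v c : ℝ) : ∫ x in Ioi c, ndens m v x ≤ 1 := by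
  rcases le_or_gt v 0 with hv | hv
  · simp [ndens_eq_gaussianPDFReal, Real.toNNReal_of_nonpos hv]
  rw [ndens_eq_gaussianPDFReal, ← integral_gaussianPDFReal_eq_one m (Real.toNNReal_pos.2 hv).ne']
  exact setIntegral_le_integral (integrable_gaussianPDFReal _ _)
    (ae_of_all _ (gaussianPDFReal_nonneg _ _))

lemma mul_ndens_le_one_add {v : ℝ} (hv : 0 < v) (m x : ℝ) : v * ndens m v x ≤ 1 + v := by
  have hexp : Real.exp (-(x - m) ^ 2 / (2 * v)) ≤ 1 :=
    Real.exp_le_one_iff.2 <|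
      div_nonpos_of_nonpos_of_nonneg (neg_nonpos.2 (sq_nonneg _)) (by positivity)
  have hdens : ndens m v x ≤ (Real.sqrt v)⁻¹ :=
    calc ndens m v x ≤ (Real.sqrt (2 * Real.pi * v))⁻¹ :=
          mul_le_of_le_one_right (by positivity) hexp
      _ ≤ (Real.sqrt v)⁻¹ := by gcongr; nlinarith [Real.pi_gt_three]
  calc v * ndens m v x ≤ v * (Real.sqrt v)⁻¹ := by gcongr
    _ = Real.sqrt v := by rw [← div_eq_mul_inv, Real.div_sqrt]
    _ ≤ 1 + v := by nlinarith [Real.sq_sqrt hv.le, sq_nonneg (Real.sqrt v - 1)]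

lemma hasDerivAt_ndens {v : ℝ} (hv : v ≠ 0) (m x : ℝ) :
    HasDerivAt (ndens m v) (-((x - m) / v) * ndens m v x) x := by
  have h : HasDerivAt (fun y => -(y - m) ^ 2 / (2 * v)) (-((x - m) / v)) x :=
    ((((hasDerivAt_id x).sub_const m).pow 2).neg.div_const (2 * v)).congr_deriv
      (by field_simp; simp)
  exact (h.exp.const_mul _).congr_deriv (by unfold ndens; ring)

lemma setIntegral_Ioi_sq_mul_ndens {v : ℝ} (hv : 0 < v) (m c : ℝ) :
    ∫ x in Ioi c, x ^ 2 * ndens m v x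
      = (m ^ 2 + v) * (∫ x in Ioi c, ndens m v x) + v * (c + m) * ndens m v c := by
  set F : ℝ → ℝ := fun x => -(v * ((x + m) * ndens m v x))
  have hF : ∀ x, HasDerivAt F ((x ^ 2 - (m ^ 2 + v)) * ndens m v x) x := fun x =>
    ((((hasDerivAt_id x).add_const m).mul (hasDerivAt_ndens hv.ne' m x)).const_mul v).neg
      |>.congr_deriv (by simp only [id]; field_simp; ring)
  have hint : ∀ n : ℕ, Integrable fun x => x ^ n * ndens m v x := integrable_pow_mul_ndens hv m
  have hint0 : Integrable (ndens m v) := by simpa using hint 0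
  have hF'int : Integrable fun x => (x ^ 2 - (m ^ 2 + v)) * ndens m v x := by
    refine ((hint 2).sub (hint0.const_mul (m ^ 2 + v))).congr (ae_of_all _ fun x => ?_)
    simp only [Pi.sub_apply]; ring
  have hFint : Integrable F := by
    refine (((hint 1).add (hint0.const_mul m)).const_mul v).neg.congr (ae_of_all _ fun x => ?_)
    simp only [Pi.neg_apply, Pi.add_apply, F]; ring
  have hlim := tendsto_zero_of_hasDerivAt_of_integrableOn_Ioi (a := c) (fun x _ => hF x)
    hF'int.integrableOn hFint.integrableOn
  have key := integral_Ioi_of_hasDerivAt_of_tendsto' (a := c) (fun x _ => hF x)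
    hF'int.integrableOn hlim
  rw [funext fun x => sub_mul _ _ (ndens m v x),
    integral_sub (hint 2).integrableOn (hint0.const_mul _).integrableOn, integral_const_mul] at key
  linear_combination key

section Mixture

variable {μ γ σ : ℝ}

lemma integrableOn_setIntegral_ndens_mul {q : ℝ → ℝ} (hq : IntegrableOn q (Ioi 0)) (c : ℝ) :
    IntegrableOn (fun θ => (∫ s in Ioi c, ndens (μ + θ * γ) (θ * σ ^ 2) s) * q θ) (Ioi 0) := by
  have hT : StronglyMeasurable fun θ => ∫ s in Ioi c, ndens (μ + θ * γ) (θ * σ ^ 2) s :=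
    (show Measurable (Function.uncurry fun θ s => ndens (μ + θ * γ) (θ * σ ^ 2) s) by
      fun_prop).stronglyMeasurable.integral_prod_right
  refine hq.norm.mono' (hT.aestronglyMeasurable.mul hq.aestronglyMeasurable)
    (ae_of_all _ fun θ => ?_)
  rw [norm_mul, Real.norm_of_nonneg
    (setIntegral_nonneg measurableSet_Ioi fun _ _ => ndens_nonneg _ _ _)]
  exact mul_le_of_le_one_left (norm_nonneg _) (setIntegral_ndens_le_one _ _ _)

lemma integrableOn_ndens_mul_mul (hσ : σ ≠ 0) {r : ℝ → ℝ} (hr : IntegrableOn r (Ioi 0))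
    (hθr : IntegrableOn (fun θ => θ * r θ) (Ioi 0)) (c : ℝ) :
    IntegrableOn (fun θ => ndens (μ + θ * γ) (θ * σ ^ 2) c * (θ * r θ)) (Ioi 0) := by
  refine ((hr.norm.const_mul (σ ^ 2)⁻¹).add hθr.norm).mono'
    ((by fun_prop : Measurable fun θ => ndens (μ + θ * γ) (θ * σ ^ 2) c).aestronglyMeasurable.mul
      hθr.aestronglyMeasurable) ?_
  filter_upwards [ae_restrict_mem measurableSet_Ioi] with θ (hθ : 0 < θ)
  have hσ2 : 0 < σ ^ 2 := by positivity
  have hbound : ndens (μ + θ * γ) (θ * σ ^ 2) c * θ ≤ (σ ^ 2)⁻¹ + θ := by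
    have := mul_ndens_le_one_add (by positivity : 0 < θ * σ ^ 2) (μ + θ * γ) c
    rw [show (σ ^ 2)⁻¹ + θ = (1 + θ * σ ^ 2) / σ ^ 2 by field_simp, le_div_iff₀ hσ2]
    linarith
  simp only [Pi.add_apply, norm_mul, Real.norm_of_nonneg (ndens_nonneg _ _ _),
    Real.norm_of_nonneg hθ.le]
  nlinarith [norm_nonneg (r θ)]

lemma setIntegral_mul_mixdens {g : ℝ → ℝ} (hg : Measurable g) (hg0 : 0 ≤ g) {w : ℝ → ℝ}
    (hw : AEStronglyMeasurable w (volume.restrict (Ioi 0))) (hw0 : ∀ θ ∈ Ioi (0:ℝ), 0 ≤ w θ)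
    {c : ℝ}
    (hinner : ∀ θ ∈ Ioi (0:ℝ),
      IntegrableOn (fun s => g s * ndens (μ + θ * γ) (θ * σ ^ 2) s) (Ioi c))
    (houter : IntegrableOn
      (fun θ => (∫ s in Ioi c, g s * ndens (μ + θ * γ) (θ * σ ^ 2) s) * w θ) (Ioi 0)) :
    ∫ s in Ioi c, g s * mixdens μ γ σ w s
      = ∫ θ in Ioi 0, (∫ s in Ioi c, g s * ndens (μ + θ * γ) (θ * σ ^ 2) s) * w θ := by
  set F : ℝ → ℝ → ℝ := fun θ s => g s * ndens (μ + θ * γ) (θ * σ ^ 2) s * w θ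
  have hFm : AEStronglyMeasurable (Function.uncurry F)
      ((volume.restrict (Ioi 0)).prod (volume.restrict (Ioi c))) :=
    (by fun_prop : Measurable fun q : ℝ × ℝ => g q.2 * ndens (μ + q.1 * γ) (q.1 * σ ^ 2) q.2)
      |>.aestronglyMeasurable.mul hw.comp_fst
  have hF : Integrable (Function.uncurry F)
      ((volume.restrict (Ioi 0)).prod (volume.restrict (Ioi c))) := by
    refine (integrable_prod_iff hFm).2 ⟨?_, houter.congr ?_⟩
    · filter_upwards [ae_restrict_mem measurableSet_Ioi] with θ hθ
      exact (hinner θ hθ).mul_const (w θ)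
    · filter_upwards [ae_restrict_mem measurableSet_Ioi] with θ hθ
      rw [← integral_mul_const]
      refine integral_congr_ae (ae_of_all _ fun s => ?_)
      exact (Real.norm_of_nonneg
        (mul_nonneg (mul_nonneg (hg0 s) (ndens_nonneg _ _ _)) (hw0 θ hθ))).symm
  calc ∫ s in Ioi c, g s * mixdens μ γ σ w s = ∫ s in Ioi c, ∫ θ in Ioi 0, F θ s := by
        refine integral_congr_ae (ae_of_all _ fun s => ?_)
        simp only [mixdens, F, ← integral_const_mul, mul_assoc]
    _ = ∫ θ in Ioi 0, ∫ s in Ioi c, F θ s := (integral_integral_swap hF).symm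
    _ = _ := integral_congr_ae (ae_of_all _ fun θ => integral_mul_const (w θ) _)

lemma surv_eq_setIntegral (hσ : σ ≠ 0) {q : ℝ → ℝ} (hq0 : ∀ θ ∈ Ioi (0:ℝ), 0 ≤ q θ)
    (hq : IntegrableOn q (Ioi 0)) (c : ℝ) :
    surv μ γ σ q c = ∫ θ in Ioi 0, (∫ s in Ioi c, ndens (μ + θ * γ) (θ * σ ^ 2) s) * q θ := by
  simpa [surv] using setIntegral_mul_mixdens (g := 1) measurable_const zero_le_one
    hq.aestronglyMeasurable hq0
    (fun θ (hθ : 0 < θ) => by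
      simpa using (integrable_pow_mul_ndens (by positivity) _ 0).integrableOn)
    (by simpa using integrableOn_setIntegral_ndens_mul hq c)

lemma setIntegral_sq_mul_mixdens (hσ : σ ≠ 0) {w : ℝ → ℝ} (hw0 : ∀ θ ∈ Ioi (0:ℝ), 0 ≤ w θ)
    (hw : IntegrableOn w (Ioi 0)) (hw1 : IntegrableOn (fun θ => θ * w θ) (Ioi 0))
    (hw2 : IntegrableOn (fun θ => θ ^ 2 * w θ) (Ioi 0)) (c : ℝ) :
    ∫ s in Ioi c, s ^ 2 * mixdens μ γ σ w s
      = μ ^ 2 * surv μ γ σ w c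
        + (2 * μ * γ + σ ^ 2) * surv μ γ σ (fun θ => θ * w θ) c
        + γ ^ 2 * surv μ γ σ (fun θ => θ ^ 2 * w θ) c
        + σ ^ 2 * (c + μ) * mixdens μ γ σ (fun θ => θ * w θ) c
        + σ ^ 2 * γ * mixdens μ γ σ (fun θ => θ ^ 2 * w θ) c := by
  set T : ℝ → ℝ := fun θ => ∫ s in Ioi c, ndens (μ + θ * γ) (θ * σ ^ 2) s
  set φ : ℝ → ℝ := fun θ => ndens (μ + θ * γ) (θ * σ ^ 2) c
  have hpt : ∀ θ ∈ Ioi (0:ℝ),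
      (∫ s in Ioi c, s ^ 2 * ndens (μ + θ * γ) (θ * σ ^ 2) s) * w θ
        = μ ^ 2 * (T θ * w θ) + (2 * μ * γ + σ ^ 2) * (T θ * (θ * w θ))
          + γ ^ 2 * (T θ * (θ ^ 2 * w θ)) + σ ^ 2 * (c + μ) * (φ θ * (θ * w θ))
          + σ ^ 2 * γ * (φ θ * (θ ^ 2 * w θ)) := fun θ (hθ : 0 < θ) => by
    rw [setIntegral_Ioi_sq_mul_ndens (by positivity)]
    ring
  have hT : ∀ q : ℝ → ℝ, IntegrableOn q (Ioi 0) → IntegrableOn (fun θ => T θ * q θ) (Ioi 0) :=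
    fun q hq => integrableOn_setIntegral_ndens_mul hq c
  have hφ1 : IntegrableOn (fun θ => φ θ * (θ * w θ)) (Ioi 0) :=
    integrableOn_ndens_mul_mul hσ hw hw1 c
  have hφ2 : IntegrableOn (fun θ => φ θ * (θ ^ 2 * w θ)) (Ioi 0) := by
    have hθw1 : IntegrableOn (fun θ => θ * (θ * w θ)) (Ioi 0) := by
      simpa only [← mul_assoc, ← pow_two] using hw2
    simpa only [← pow_two, ← mul_assoc] using integrableOn_ndens_mul_mul hσ hw1 hθw1 c
  have hsum : IntegrableOn (fun θ => μ ^ 2 * (T θ * w θ) + (2 * μ * γ + σ ^ 2) * (T θ * (θ * w θ))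
          + γ ^ 2 * (T θ * (θ ^ 2 * w θ)) + σ ^ 2 * (c + μ) * (φ θ * (θ * w θ))
          + σ ^ 2 * γ * (φ θ * (θ ^ 2 * w θ))) (Ioi 0) := by
    apply_rules [Integrable.add, Integrable.const_mul]
  rw [setIntegral_mul_mixdens (g := fun s => s ^ 2) (by fun_prop) (fun s => sq_nonneg s)
      hw.aestronglyMeasurable hw0
      (fun θ (hθ : 0 < θ) => (integrable_pow_mul_ndens (by positivity) _ 2).integrableOn)
      (hsum.congr_fun (fun θ hθ => (hpt θ hθ).symm) measurableSet_Ioi),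
    setIntegral_congr_fun measurableSet_Ioi hpt, integral_add, integral_add, integral_add,
    integral_add]
  · simp only [integral_const_mul, T, φ, mixdens, surv_eq_setIntegral hσ hw0 hw,
      surv_eq_setIntegral hσ (fun θ (hθ : 0 < θ) => mul_nonneg hθ.le (hw0 θ hθ)) hw1,
      surv_eq_setIntegral hσ (fun θ (hθ : 0 < θ) => mul_nonneg (by positivity) (hw0 θ hθ)) hw2]
  all_goals apply_rules [Integrable.add, Integrable.const_mul]

lemma mixdens_div_const (q : ℝ → ℝ) (a s : ℝ) :
    mixdens μ γ σ (fun θ => q θ / a) s = mixdens μ γ σ q s / a := by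
  simp only [mixdens, mul_div_assoc', integral_div]

lemma surv_div_const (q : ℝ → ℝ) (a c : ℝ) :
    surv μ γ σ (fun θ => q θ / a) c = surv μ γ σ q c / a := by
  simp only [surv, mixdens_div_const, integral_div]

end Mixture

theorem nmvm_second_tail_moment_general
    (μ γ σ α sα : ℝ) (hσ : 0 < σ) (p : ℝ → ℝ)
    (hp0 : ∀ θ, 0 ≤ p θ) (hp1 : ∫ θ in Set.Ioi (0:ℝ), p θ = 1)
    (cstar : ℝ) (hcstar : cstar = ∫ θ in Set.Ioi (0:ℝ), θ * p θ) (hcpos : 0 < cstar)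
    (css : ℝ) (hcss : css = ∫ θ in Set.Ioi (0:ℝ), θ ^ 2 * p θ) (hcsspos : 0 < css)
    (pstar : ℝ → ℝ) (hpstar : pstar = fun θ => θ * p θ / cstar)
    (pss : ℝ → ℝ) (hpss : pss = fun θ => θ ^ 2 * p θ / css)
    (hα01 : α ∈ Set.Ioo (0:ℝ) 1)
    (hquant : surv μ γ σ p sα = 1 - α)
    (αstar : ℝ) (hαstar : αstar = 1 - surv μ γ σ pstar sα)
    (αss : ℝ) (hαss : αss = 1 - surv μ γ σ pss sα)
    (hspos : 0 < surv μ γ σ pstar sα) (hsspos : 0 < surv μ γ σ pss sα) :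
    tailmom μ γ σ p 2 sα
      = μ ^ 2
        + cstar * (1 - αstar) / (1 - α) *
          (σ ^ 2 + 2 * μ * γ
            + σ ^ 2 * (sα + μ) * (mixdens μ γ σ pstar sα / surv μ γ σ pstar sα))
        + css * (1 - αss) / (1 - α) *
          (γ ^ 2 + γ * σ ^ 2 * (mixdens μ γ σ pss sα / surv μ γ σ pss sα)) := by
  subst hpstar hpss hαstar hαss
  have hp : IntegrableOn p (Ioi 0) := .of_integral_ne_zero (by rw [hp1]; exact one_ne_zero)
  have hθp : IntegrableOn (fun θ => θ * p θ) (Ioi 0) := .of_integral_ne_zero (hcstar ▸ hcpos.ne')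
  have hθ2p : IntegrableOn (fun θ => θ ^ 2 * p θ) (Ioi 0) :=
    .of_integral_ne_zero (hcss ▸ hcsspos.ne')
  have hα : 1 - α ≠ 0 := (sub_pos.2 hα01.2).ne'
  rw [surv_div_const, div_pos_iff_of_pos_right hcpos] at hspos
  rw [surv_div_const, div_pos_iff_of_pos_right hcsspos] at hsspos
  rw [tailmom, setIntegral_sq_mul_mixdens hσ.ne' (fun θ _ => hp0 θ) hp hθp hθ2p, hquant,
    surv_div_const, surv_div_const, mixdens_div_const, mixdens_div_const]
  field_simp
  ring

/-- second-order tail moment of a univariate NMVM random variable. -/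
theorem nmvm_second_tail_moment
    (μ γ σ α sα : ℝ) (hσ : 0 < σ) (p : ℝ → ℝ)
    (hp0 : ∀ θ, 0 ≤ p θ) (hp1 : ∫ θ in Set.Ioi (0:ℝ), p θ = 1)
    (cstar : ℝ) (hcstar : cstar = ∫ θ in Set.Ioi (0:ℝ), θ * p θ) (hcpos : 0 < cstar)
    (css : ℝ) (hcss : css = ∫ θ in Set.Ioi (0:ℝ), θ ^ 2 * p θ) (hcsspos : 0 < css)
    (pstar : ℝ → ℝ) (hpstar : pstar = fun θ => θ * p θ / cstar)
    (pss : ℝ → ℝ) (hpss : pss = fun θ => θ ^ 2 * p θ / css)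
    (hα01 : α ∈ Set.Ioo (0:ℝ) 1)
    (hquant : surv μ γ σ p sα = 1 - α)
    (αstar : ℝ) (hαstar : αstar = 1 - surv μ γ σ pstar sα)
    (αss : ℝ) (hαss : αss = 1 - surv μ γ σ pss sα)
    (hspos : 0 < surv μ γ σ pstar sα) (hsspos : 0 < surv μ γ σ pss sα)
    (hintp : ∀ j ≤ 2, IntegrableOn (fun s => s ^ j * mixdens μ γ σ p s) (Set.Ioi sα)) :
    tailmom μ γ σ p 2 sα
      = μ ^ 2
        + cstar * (1 - αstar) / (1 - α) *
          (σ ^ 2 + 2 * μ * γ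
            + σ ^ 2 * (sα + μ) * (mixdens μ γ σ pstar sα / surv μ γ σ pstar sα))
        + css * (1 - αss) / (1 - α) *
          (γ ^ 2 + γ * σ ^ 2 * (mixdens μ γ σ pss sα / surv μ γ σ pss sα)) :=
  nmvm_second_tail_moment_general μ γ σ α sα hσ p hp0 hp1 cstar hcstar hcpos css hcss hcsspos pstar
    hpstar pss hpss hα01 hquant αstar hαstar αss hαss hspos hsspos
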